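/- arXiv:1711.10633 — 4 statements merged into one kernel-verified Lean document; each statement's English description precedes it below -/
import Mathlib

section
/- Let T ≥ 1, let X_1,…,X_T and Y_1,…,Y_T be finite nonempty types, let P_t : X_t → ℝ≥0 and Q_t : Y_t → ℝ≥0 be probability vectors (each summing to 1), let w_t ≥ 0 be weights and d_t : X_t × Y_t → ℝ≥0 stage costs, and let the path cost be d(ξ,ζ) = Σ_{t=1}^T w_t · d_t(ξ_t, ζ_t). Then the nested distance LP value ND between the two stagewise-independent trees (with path probabilities P(i) = ∏_t P_t(i_t) and Q(j) = ∏_t Q_t(j_t)) equals the weighted sum of the stagewise Wasserstein values: ND = Σ_{t=1}^T w_t · d_W(P_t, Q_t; d_t). -/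
open scoped NNReal Classical
open Finset

noncomputable section

/-- A full path of a `T`-stage scenario tree with stage types `X 0, …, X (T-1)`
(0-indexed: index `t` corresponds to stage `t+1` of the paper). -/
abbrev NDPath (X : ℕ → Type) (T : ℕ) := ∀ t : Fin T, X t.1

/-- A stage-`t` prefix (the history of the first `t` stages); `t = 0` is the root. -/
abbrev NDPre (X : ℕ → Type) (t : ℕ) := ∀ τ : Fin t, X τ.1

/-- The path `i` extends the stage-`t` prefix `k`. -/
def NDExtends {X : ℕ → Type} {T t : ℕ} (i : NDPath X T) (k : NDPre X t) : Prop :=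
  ∀ (τ : Fin t) (h : τ.1 < T), i ⟨τ.1, h⟩ = k τ

/-- The subtree weight `π_{k,l}` of a transport plan `π` on path pairs:
the total mass of `π` on path pairs extending the prefix pair `(k, l)`. -/
def NDsubw {X Y : ℕ → Type} {T : ℕ} [∀ n, Fintype (X n)] [∀ n, Fintype (Y n)]
    (π : NDPath X T → NDPath Y T → ℝ≥0) (t : ℕ) (k : NDPre X t) (l : NDPre Y t) : ℝ≥0 :=
  ∑ i : NDPath X T, ∑ j : NDPath Y T,
    if NDExtends i k ∧ NDExtends j l then π i j else 0

/-- The nested distance LP value: minimum of `∑ π(i,j) d(i,j)` over transport plans of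
total mass one satisfying the successor-form conditional marginal constraints. -/
def NDval {X Y : ℕ → Type} (T : ℕ) [∀ n, Fintype (X n)] [∀ n, Fintype (Y n)]
    (p : ∀ t, NDPre X t → X t → ℝ≥0) (q : ∀ t, NDPre Y t → Y t → ℝ≥0)
    (d : NDPath X T → NDPath Y T → ℝ≥0) : ℝ≥0 :=
  sInf { v | ∃ π : NDPath X T → NDPath Y T → ℝ≥0,
    (∑ i, ∑ j, π i j) = 1 ∧
    (∀ t, t < T → ∀ (k : NDPre X t) (l : NDPre Y t) (x : X t) (y : Y t),
      (∑ y' : Y t, NDsubw π (t+1) (Fin.snoc k x) (Fin.snoc l y'))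
          = p t k x * NDsubw π t k l ∧
      (∑ x' : X t, NDsubw π (t+1) (Fin.snoc k x') (Fin.snoc l y))
          = q t l y * NDsubw π t k l) ∧
    v = ∑ i, ∑ j, π i j * d i j }

/-- The sub-tree distance `D_t(k,l)`, defined by backward recursion: at `t = T` it is the
path cost, and for `t < T` it is the optimal value of the stage-`t` transport subproblem. -/
def NDsub {X Y : ℕ → Type} (T : ℕ) [∀ n, Fintype (X n)] [∀ n, Fintype (Y n)]
    (p : ∀ t, NDPre X t → X t → ℝ≥0) (q : ∀ t, NDPre Y t → Y t → ℝ≥0)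
    (d : NDPath X T → NDPath Y T → ℝ≥0)
    (t : ℕ) (k : NDPre X t) (l : NDPre Y t) : ℝ≥0 :=
  if h : t < T then
    sInf { v | ∃ π : X t → Y t → ℝ≥0,
      (∀ x, ∑ y, π x y = p t k x) ∧ (∀ y, ∑ x, π x y = q t l y) ∧
      v = ∑ x, ∑ y, π x y * NDsub T p q d (t+1) (Fin.snoc k x) (Fin.snoc l y) }
  else
    d (fun τ => k ⟨τ.1, lt_of_lt_of_le τ.2 (not_lt.mp h)⟩)
      (fun τ => l ⟨τ.1, lt_of_lt_of_le τ.2 (not_lt.mp h)⟩)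
  termination_by T - t
  decreasing_by omega

/-- The dynamic-programming value function `Φ_t(k,l,m)` with mass argument `m`. -/
def NDPhi {X Y : ℕ → Type} (T : ℕ) [∀ n, Fintype (X n)] [∀ n, Fintype (Y n)]
    (p : ∀ t, NDPre X t → X t → ℝ≥0) (q : ∀ t, NDPre Y t → Y t → ℝ≥0)
    (d : NDPath X T → NDPath Y T → ℝ≥0)
    (t : ℕ) (k : NDPre X t) (l : NDPre Y t) (m : ℝ≥0) : ℝ≥0 :=
  if h : t < T then
    sInf { v | ∃ π : X t → Y t → ℝ≥0,
      (∀ x, ∑ y, π x y = p t k x * m) ∧ (∀ y, ∑ x, π x y = q t l y * m) ∧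
      v = ∑ x, ∑ y, NDPhi T p q d (t+1) (Fin.snoc k x) (Fin.snoc l y) (π x y) }
  else
    m * d (fun τ => k ⟨τ.1, lt_of_lt_of_le τ.2 (not_lt.mp h)⟩)
          (fun τ => l ⟨τ.1, lt_of_lt_of_le τ.2 (not_lt.mp h)⟩)
  termination_by T - t
  decreasing_by omega

/-- The Wasserstein (optimal transport) value between two probability vectors for a cost `c`. -/
def dW {A B : Type*} [Fintype A] [Fintype B]
    (P : A → ℝ≥0) (Q : B → ℝ≥0) (c : A → B → ℝ≥0) : ℝ≥0 :=
  sInf { v | ∃ π : A → B → ℝ≥0,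
    (∀ a, ∑ b, π a b = P a) ∧ (∀ b, ∑ a, π a b = Q b) ∧
    v = ∑ a, ∑ b, π a b * c a b }

/-- The conditional probability `P(i ∣ k)` of the path `i` given its stage-`t` prefix:
the product of the conditional probabilities of the steps of `i` after stage `t`.
With `t = 0` this is the (unconditional) path probability `P(i)`. -/
def NDcondP {X : ℕ → Type} {T : ℕ} (p : ∀ t, NDPre X t → X t → ℝ≥0)
    (t : ℕ) (i : NDPath X T) : ℝ≥0 :=
  ∏ τ ∈ Finset.Ico t T,
    if h : τ < T then p τ (fun s => i ⟨s.1, lt_trans s.2 h⟩) (i ⟨τ, h⟩) else 1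

end

/-! Any feasible plan `π` induces at each stage `t` a marginal on `X t × Y t`; summing the
conditional-marginal constraints over all prefix pairs shows that it is a coupling of `P t` and
`Q t`. Since the path cost is separable, the cost of `π` is the weighted sum of the stagewise costs
of these marginals, whence `ND ≥ ∑ w t * dW`. Conversely, optimal stagewise couplings exist by
compactness, and their product is a feasible plan attaining the bound: its subtree weights factor
over the stages, so the conditional constraints reduce to the stagewise marginal constraints. -/

section Coupling

variable {A B : Type*} [Fintype A] [Fintype B]

def IsCoupling (P : A → ℝ≥0) (Q : B → ℝ≥0) (π : A → B → ℝ≥0) : Prop :=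
  (∀ a, ∑ b, π a b = P a) ∧ ∀ b, ∑ a, π a b = Q b

variable {P : A → ℝ≥0} {Q : B → ℝ≥0}

lemma isCoupling_mul (hP : ∑ a, P a = 1) (hQ : ∑ b, Q b = 1) :
    IsCoupling P Q fun a b => P a * Q b :=
  ⟨fun a => by rw [← mul_sum, hQ, mul_one], fun b => by rw [← sum_mul, hP, one_mul]⟩

lemma dW_le {π : A → B → ℝ≥0} (hπ : IsCoupling P Q π) (c : A → B → ℝ≥0) :
    dW P Q c ≤ ∑ a, ∑ b, π a b * c a b :=
  csInf_le (OrderBot.bddBelow _) ⟨π, hπ.1, hπ.2, rfl⟩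

lemma IsCoupling.sum_sum_eq {π : A → B → ℝ≥0} (hπ : IsCoupling P Q π) :
    ∑ a, ∑ b, π a b = ∑ a, P a :=
  sum_congr rfl fun a _ => hπ.1 a

lemma isCompact_setOf_isCoupling : IsCompact {π | IsCoupling P Q π} := by
  refine (isCompact_univ_pi fun a => isCompact_univ_pi fun _ => isCompact_Icc (a := 0) (b := P a))
    |>.of_isClosed_subset ?_ ?_
  · simp only [IsCoupling, Set.ofPred_and, Set.ofPred_forall]
    exact (isClosed_iInter fun a => isClosed_eq (by fun_prop) (by fun_prop)).inter
      (isClosed_iInter fun b => isClosed_eq (by fun_prop) (by fun_prop))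
  · intro π hπ
    simp only [Set.mem_pi, Set.mem_univ, Set.mem_Icc, zero_le, true_and, forall_const]
    intro a b
    exact (hπ.1 a) ▸ single_le_sum (fun _ _ => zero_le) (mem_univ b)

lemma exists_isCoupling_dW_eq (h : ∃ π, IsCoupling P Q π) (c : A → B → ℝ≥0) :
    ∃ π, IsCoupling P Q π ∧ dW P Q c = ∑ a, ∑ b, π a b * c a b := by
  obtain ⟨π, hπ, hmin⟩ := isCompact_setOf_isCoupling.exists_isMinOn h
    (f := fun π => ∑ a, ∑ b, π a b * c a b) (by fun_prop)
  refine ⟨π, hπ, le_antisymm (dW_le hπ c) (le_csInf ⟨_, π, hπ.1, hπ.2, rfl⟩ ?_)⟩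
  rintro v ⟨π', hrow, hcol, rfl⟩
  exact hmin ⟨hrow, hcol⟩

end Coupling

section Tree

variable {X Y : ℕ → Type} {T t : ℕ}

def pathPrefix (htT : t ≤ T) (i : NDPath X T) : NDPre X t :=
  fun τ => i ⟨τ.1, τ.2.trans_le htT⟩

lemma NDExtends_iff_eq_pathPrefix (htT : t ≤ T) {i : NDPath X T} {k : NDPre X t} :
    NDExtends i k ↔ k = pathPrefix htT i :=
  ⟨fun h => funext fun τ => (h τ _).symm, by rintro rfl τ _; rfl⟩

lemma NDExtends_snoc (ht : t < T) {i : NDPath X T} {k : NDPre X t} {x : X t} :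
    NDExtends i (Fin.snoc k x : NDPre X (t + 1)) ↔ NDExtends i k ∧ i ⟨t, ht⟩ = x := by
  refine ⟨fun h => ⟨fun τ hτ => ?_, ?_⟩, fun ⟨hk, hx⟩ τ hτ => ?_⟩
  · simpa using h τ.castSucc hτ
  · simpa using h (Fin.last t) ht
  · induction τ using Fin.lastCases with
    | last => simpa using hx
    | cast σ => simpa using hk σ hτ

variable [∀ n, Fintype (X n)] [∀ n, Fintype (Y n)]

lemma sum_NDsubw (π : NDPath X T → NDPath Y T → ℝ≥0) (htT : t ≤ T) :
    ∑ k : NDPre X t, ∑ l : NDPre Y t, NDsubw π t k l = ∑ i, ∑ j, π i j := by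
  simp only [NDsubw, NDExtends_iff_eq_pathPrefix htT]
  rw [sum_comm_cycle]
  refine sum_congr rfl fun i _ => ?_
  rw [sum_comm_cycle]
  simp [ite_and]

noncomputable def stageMarginal (π : NDPath X T → NDPath Y T → ℝ≥0) (t : Fin T)
    (x : X t) (y : Y t) : ℝ≥0 :=
  ∑ i, ∑ j, if i t = x ∧ j t = y then π i j else 0

lemma sum_NDsubw_snoc (π : NDPath X T → NDPath Y T → ℝ≥0) (t : Fin T) (x : X t) (y : Y t) :
    ∑ k : NDPre X t, ∑ l : NDPre Y t, NDsubw π (t + 1) (Fin.snoc k x) (Fin.snoc l y) =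
      stageMarginal π t x y := by
  simp only [NDsubw, NDExtends_snoc t.2, NDExtends_iff_eq_pathPrefix t.2.le]
  rw [sum_comm_cycle]
  refine sum_congr rfl fun i _ => ?_
  rw [sum_comm_cycle]
  simp [ite_and]

lemma sum_stageMarginal_mul (π : NDPath X T → NDPath Y T → ℝ≥0) (t : Fin T)
    (f : X t → Y t → ℝ≥0) :
    ∑ x, ∑ y, stageMarginal π t x y * f x y = ∑ i, ∑ j, π i j * f (i t) (j t) := by
  simp only [stageMarginal, sum_mul, ite_mul, zero_mul]
  rw [sum_comm_cycle]
  refine sum_congr rfl fun i _ => ?_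
  rw [sum_comm_cycle]
  simp [ite_and]

lemma sum_mul_sum_stage_eq_sum_stageMarginal (π : NDPath X T → NDPath Y T → ℝ≥0) (w : ℕ → ℝ≥0)
    (c : ∀ n, X n → Y n → ℝ≥0) :
    ∑ i, ∑ j, π i j * ∑ t : Fin T, w t * c t (i t) (j t) =
      ∑ t : Fin T, w t * ∑ x, ∑ y, stageMarginal π t x y * c t x y := by
  simp_rw [sum_stageMarginal_mul, mul_sum]
  rw [sum_comm_cycle]
  simp_rw [mul_left_comm]

end Tree

section Plan

variable {X Y : ℕ → Type} [∀ n, Fintype (X n)] [∀ n, Fintype (Y n)] {T : ℕ}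

def IsNDPlan (T : ℕ) (p : ∀ t, NDPre X t → X t → ℝ≥0) (q : ∀ t, NDPre Y t → Y t → ℝ≥0)
    (π : NDPath X T → NDPath Y T → ℝ≥0) : Prop :=
  (∑ i, ∑ j, π i j) = 1 ∧
    ∀ t, t < T → ∀ (k : NDPre X t) (l : NDPre Y t) (x : X t) (y : Y t),
      (∑ y' : Y t, NDsubw π (t+1) (Fin.snoc k x) (Fin.snoc l y')) = p t k x * NDsubw π t k l ∧
      (∑ x' : X t, NDsubw π (t+1) (Fin.snoc k x') (Fin.snoc l y)) = q t l y * NDsubw π t k l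

variable {p : ∀ t, NDPre X t → X t → ℝ≥0} {q : ∀ t, NDPre Y t → Y t → ℝ≥0}
  {π : NDPath X T → NDPath Y T → ℝ≥0}

lemma NDval_le (hπ : IsNDPlan T p q π) (d : NDPath X T → NDPath Y T → ℝ≥0) :
    NDval T p q d ≤ ∑ i, ∑ j, π i j * d i j :=
  csInf_le (OrderBot.bddBelow _) ⟨π, hπ.1, hπ.2, rfl⟩

lemma le_NDval {d : NDPath X T → NDPath Y T → ℝ≥0} {v : ℝ≥0} (hne : ∃ π, IsNDPlan T p q π)
    (h : ∀ π, IsNDPlan T p q π → v ≤ ∑ i, ∑ j, π i j * d i j) : v ≤ NDval T p q d := by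
  obtain ⟨π, hπ⟩ := hne
  refine le_csInf ⟨_, π, hπ.1, hπ.2, rfl⟩ ?_
  rintro _ ⟨π', hmass, hcond, rfl⟩
  exact h π' ⟨hmass, hcond⟩

lemma isCoupling_stageMarginal {P : ∀ n, X n → ℝ≥0} {Q : ∀ n, Y n → ℝ≥0}
    (hπ : IsNDPlan T (fun t _ x => P t x) (fun t _ y => Q t y) π)
    (t : Fin T) [Nonempty (X t)] [Nonempty (Y t)] :
    IsCoupling (P t) (Q t) (stageMarginal π t) := by
  obtain ⟨x₀⟩ := ‹Nonempty (X t)›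
  obtain ⟨y₀⟩ := ‹Nonempty (Y t)›
  have hmass : ∑ k : NDPre X t, ∑ l : NDPre Y t, NDsubw π t k l = 1 :=
    (sum_NDsubw π t.2.le).trans hπ.1
  constructor
  · intro x
    calc ∑ y, stageMarginal π t x y
        = ∑ k : NDPre X t, ∑ l : NDPre Y t, ∑ y,
            NDsubw π (t + 1) (Fin.snoc k x) (Fin.snoc l y) := by
          simp_rw [← sum_NDsubw_snoc]
          exact sum_comm_cycle.symm
      _ = ∑ k : NDPre X t, ∑ l : NDPre Y t, P t x * NDsubw π t k l :=
          sum_congr rfl fun k _ => sum_congr rfl fun l _ => (hπ.2 t t.2 k l x y₀).1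
      _ = P t x := by simp_rw [← mul_sum, hmass, mul_one]
  · intro y
    calc ∑ x, stageMarginal π t x y
        = ∑ k : NDPre X t, ∑ l : NDPre Y t, ∑ x,
            NDsubw π (t + 1) (Fin.snoc k x) (Fin.snoc l y) := by
          simp_rw [← sum_NDsubw_snoc]
          exact sum_comm_cycle.symm
      _ = ∑ k : NDPre X t, ∑ l : NDPre Y t, Q t y * NDsubw π t k l :=
          sum_congr rfl fun k _ => sum_congr rfl fun l _ => (hπ.2 t t.2 k l x₀ y).2
      _ = Q t y := by simp_rw [← mul_sum, hmass, mul_one]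

end Plan

lemma sum_sum_prod_eq_prod_sum_sum {ι R : Type*} [Fintype ι] [DecidableEq ι] [CommSemiring R]
    {κ κ' : ι → Type*} [∀ τ, Fintype (κ τ)] [∀ τ, Fintype (κ' τ)] (g : ∀ τ, κ τ → κ' τ → R) :
    ∑ i : ∀ τ, κ τ, ∑ j : ∀ τ, κ' τ, ∏ τ, g τ (i τ) (j τ) = ∏ τ, ∑ x, ∑ y, g τ x y := by
  simp only [Fintype.prod_sum]

section ProductPlan

variable {X Y : ℕ → Type} [∀ n, Fintype (X n)] [∀ n, Fintype (Y n)] {T t : ℕ}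

def productPlan (γ : ∀ τ : Fin T, X τ → Y τ → ℝ≥0) (i : NDPath X T) (j : NDPath Y T) : ℝ≥0 :=
  ∏ τ, γ τ (i τ) (j τ)

variable {γ : ∀ τ : Fin T, X τ → Y τ → ℝ≥0}

lemma sum_productPlan (hmass : ∀ τ, ∑ x, ∑ y, γ τ x y = 1) : ∑ i, ∑ j, productPlan γ i j = 1 := by
  simp only [productPlan]
  rw [sum_sum_prod_eq_prod_sum_sum, prod_eq_one fun τ _ => hmass τ]

lemma NDsubw_productPlan (hmass : ∀ τ, ∑ x, ∑ y, γ τ x y = 1) (k : NDPre X t) (l : NDPre Y t) :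
    NDsubw (productPlan γ) t k l =
      ∏ τ : Fin T, if h : τ.1 < t then γ τ (k ⟨τ, h⟩) (l ⟨τ, h⟩) else 1 := by
  let g : ∀ τ : Fin T, X τ → Y τ → ℝ≥0 := fun τ a b =>
    (if ∀ h : τ.1 < t, a = k ⟨τ, h⟩ ∧ b = l ⟨τ, h⟩ then 1 else 0) * γ τ a b
  have hterm : ∀ i j, (if NDExtends i k ∧ NDExtends j l then productPlan γ i j else 0) =
      ∏ τ, g τ (i τ) (j τ) := by
    intro i j
    simp only [g]
    rw [prod_mul_distrib]
    simp only [prod_boole, ite_mul, one_mul, zero_mul, productPlan]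
    congr 1
    refine propext ⟨?_, fun h => ⟨fun σ hσ => (h ⟨σ, hσ⟩ (mem_univ _) σ.2).1,
      fun σ hσ => (h ⟨σ, hσ⟩ (mem_univ _) σ.2).2⟩⟩
    rintro ⟨hi, hj⟩ τ - h
    exact ⟨hi ⟨τ, h⟩ τ.2, hj ⟨τ, h⟩ τ.2⟩
  simp only [NDsubw, hterm]
  rw [sum_sum_prod_eq_prod_sum_sum g]
  refine prod_congr rfl fun τ _ => ?_
  by_cases h : τ.1 < t
  · simp [g, h, ite_and]
  · simp [g, h, hmass τ]

lemma NDsubw_productPlan_snoc (hmass : ∀ τ, ∑ x, ∑ y, γ τ x y = 1) (ht : t < T) (k : NDPre X t)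
    (l : NDPre Y t) (x : X t) (y : Y t) :
    NDsubw (productPlan γ) (t + 1) (Fin.snoc k x) (Fin.snoc l y) =
      γ ⟨t, ht⟩ x y * NDsubw (productPlan γ) t k l := by
  rw [NDsubw_productPlan hmass, NDsubw_productPlan hmass,
    ← mul_prod_erase univ _ (mem_univ ⟨t, ht⟩), ← mul_prod_erase univ _ (mem_univ ⟨t, ht⟩)]
  simp only [lt_add_one, dif_pos, lt_irrefl, dif_neg, not_false_eq_true, one_mul]
  congr 1
  · simp [Fin.snoc]
  · refine prod_congr rfl fun τ hτ => ?_
    have hτt : τ.1 ≠ t := fun h => (mem_erase.1 hτ).1 (Fin.ext h)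
    by_cases h : τ.1 < t
    · simp [h, Nat.lt_succ_of_lt h, Fin.snoc]
    · simp [h, show ¬ τ.1 < t + 1 by omega]

lemma stageMarginal_productPlan (hmass : ∀ τ, ∑ x, ∑ y, γ τ x y = 1) (t : Fin T) :
    stageMarginal (productPlan γ) t = γ t := by
  ext x y
  rw [← sum_NDsubw_snoc]
  simp_rw [NDsubw_productPlan_snoc hmass t.2, ← mul_sum, sum_NDsubw _ t.2.le, sum_productPlan hmass,
    mul_one]

lemma isNDPlan_productPlan {P : ∀ n, X n → ℝ≥0} {Q : ∀ n, Y n → ℝ≥0}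
    (hγ : ∀ τ : Fin T, IsCoupling (P τ) (Q τ) (γ τ)) (hmass : ∀ τ, ∑ x, ∑ y, γ τ x y = 1) :
    IsNDPlan T (fun t _ x => P t x) (fun t _ y => Q t y) (productPlan γ) := by
  refine ⟨sum_productPlan hmass, fun t ht k l x y => ⟨?_, ?_⟩⟩
  · simp_rw [NDsubw_productPlan_snoc hmass ht, ← sum_mul, (hγ ⟨t, ht⟩).1 x]
  · simp_rw [NDsubw_productPlan_snoc hmass ht, ← sum_mul, (hγ ⟨t, ht⟩).2 y]

end ProductPlan

theorem nestedDistance_eq_sum_wasserstein_general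
    (T : ℕ) (X Y : ℕ → Type)
    [∀ n, Fintype (X n)]
    [∀ n, Fintype (Y n)]
    (P : ∀ n, X n → ℝ≥0) (Q : ∀ n, Y n → ℝ≥0)
    (hP : ∀ t, t < T → ∑ x, P t x = 1) (hQ : ∀ t, t < T → ∑ y, Q t y = 1)
    (w : ℕ → ℝ≥0) (dstage : ∀ n, X n → Y n → ℝ≥0) :
    NDval T (fun t _ x => P t x) (fun t _ y => Q t y)
        (fun i j => ∑ t : Fin T, w t.1 * dstage t.1 (i t) (j t))
      = ∑ t : Fin T, w t.1 * dW (P t.1) (Q t.1) (dstage t.1) := by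
  have (t : Fin T) : Nonempty (X t) :=
    univ_nonempty_iff.mp (nonempty_of_sum_ne_zero (f := P t) (by simp [hP t t.2]))
  have (t : Fin T) : Nonempty (Y t) :=
    univ_nonempty_iff.mp (nonempty_of_sum_ne_zero (f := Q t) (by simp [hQ t t.2]))
  choose γ hγ hγ_opt using fun t : Fin T =>
    exists_isCoupling_dW_eq ⟨_, isCoupling_mul (hP t t.2) (hQ t t.2)⟩ (dstage t)
  have hmass (t : Fin T) : ∑ x, ∑ y, γ t x y = 1 := (hγ t).sum_sum_eq.trans (hP t t.2)
  have hplan := isNDPlan_productPlan hγ hmass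
  refine le_antisymm ((NDval_le hplan _).trans_eq ?_) (le_NDval ⟨_, hplan⟩ fun π hπ => ?_)
  · simp_rw [sum_mul_sum_stage_eq_sum_stageMarginal, stageMarginal_productPlan hmass, hγ_opt]
  · rw [sum_mul_sum_stage_eq_sum_stageMarginal]
    exact sum_le_sum fun t _ => mul_le_mul_right (dW_le (isCoupling_stageMarginal hπ t) _) _

/-- For stagewise-independent trees and a separable path cost,
the nested distance equals the weighted sum of the stagewise Wasserstein distances. -/
theorem nestedDistance_eq_sum_wasserstein
    (T : ℕ) (hT : 1 ≤ T) (X Y : ℕ → Type)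
    [∀ n, Fintype (X n)] [∀ n, Nonempty (X n)]
    [∀ n, Fintype (Y n)] [∀ n, Nonempty (Y n)]
    (P : ∀ n, X n → ℝ≥0) (Q : ∀ n, Y n → ℝ≥0)
    (hP : ∀ t, t < T → ∑ x, P t x = 1) (hQ : ∀ t, t < T → ∑ y, Q t y = 1)
    (w : ℕ → ℝ≥0) (dstage : ∀ n, X n → Y n → ℝ≥0) :
    NDval T (fun t _ x => P t x) (fun t _ y => Q t y)
        (fun i j => ∑ t : Fin T, w t.1 * dstage t.1 (i t) (j t))
      = ∑ t : Fin T, w t.1 * dW (P t.1) (Q t.1) (dstage t.1) :=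
  nestedDistance_eq_sum_wasserstein_general T X Y P Q hP hQ w dstage
end

section
/- Let T ≥ 1, let X_1,…,X_T and Y_1,…,Y_T be finite nonempty types, let P_t : X_t → ℝ≥0 and Q_t : Y_t → ℝ≥0 be probability vectors, let w_t ≥ 0 be weights and d_t : X_t × Y_t → ℝ≥0 stage costs, and let d(ξ,ζ) = Σ_{t=1}^T w_t · d_t(ξ_t, ζ_t). Then for every 0 ≤ t ≤ T and every stage-t prefix pair (k,l), the recursively defined sub-tree distance satisfies D_t(k,l) = Σ_{τ=1}^{t} w_τ · d_τ(k_τ, l_τ) + Σ_{τ=t+1}^{T} w_τ · d_W(P_τ, Q_τ; d_τ), where k_τ, l_τ denote the τ-th coordinates of the prefixes k and l. -/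
/-! Backward induction on `t`. Because the successor probabilities do not depend on the prefix
and the cost is stagewise separable, the induction hypothesis makes `D_{t+1}(k·x, l·y)` a
constant (independent of `x`, `y`) plus `w_t · d_t(x, y)`. The stage-`t` transport problem thus
has an affine cost, and since every coupling has mass one its value is that constant plus
`w_t · d_W(P_t, Q_t; d_t)`. -/

open scoped NNReal Classical
open Finset

section Wasserstein

variable {A B : Type*} [Fintype A] [Fintype B] {P : A → ℝ≥0} {Q : B → ℝ≥0}

theorem exists_coupling_of_sum_eq_one (hP : ∑ a, P a = 1) (hQ : ∑ b, Q b = 1) :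
    ∃ π : A → B → ℝ≥0, (∀ a, ∑ b, π a b = P a) ∧ (∀ b, ∑ a, π a b = Q b) :=
  ⟨fun a b => P a * Q b, fun a => by rw [← mul_sum, hQ, mul_one],
    fun b => by rw [← sum_mul, hP, one_mul]⟩

theorem sum_coupling_mul_const_add_mul (hP : ∑ a, P a = 1) {π : A → B → ℝ≥0}
    (hπ : ∀ a, ∑ b, π a b = P a) (r s : ℝ≥0) (c : A → B → ℝ≥0) :
    ∑ a, ∑ b, π a b * (r + s * c a b) = r + s * ∑ a, ∑ b, π a b * c a b := by
  simp only [mul_add, mul_left_comm _ s, sum_add_distrib, ← sum_mul, ← mul_sum, hπ, hP,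
    one_mul]

theorem dW_const_add_mul (hP : ∑ a, P a = 1) (hQ : ∑ b, Q b = 1) (r s : ℝ≥0)
    (c : A → B → ℝ≥0) :
    dW P Q (fun a b => r + s * c a b) = r + s * dW P Q c := by
  set S := { v | ∃ π : A → B → ℝ≥0, (∀ a, ∑ b, π a b = P a) ∧ (∀ b, ∑ a, π a b = Q b) ∧
    v = ∑ a, ∑ b, π a b * c a b }
  have hS : S.Nonempty := by
    obtain ⟨π, hπP, hπQ⟩ := exists_coupling_of_sum_eq_one hP hQ
    exact ⟨_, π, hπP, hπQ, rfl⟩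
  have himage : dW P Q (fun a b => r + s * c a b) = sInf ((fun v => r + s * v) '' S) := by
    unfold dW
    congr 1
    ext v
    constructor
    · rintro ⟨π, hπP, hπQ, rfl⟩
      exact ⟨_, ⟨π, hπP, hπQ, rfl⟩, (sum_coupling_mul_const_add_mul hP hπP r s c).symm⟩
    · rintro ⟨_, ⟨π, hπP, hπQ, rfl⟩, rfl⟩
      exact ⟨π, hπP, hπQ, (sum_coupling_mul_const_add_mul hP hπP r s c).symm⟩
  have hmono : Monotone (fun v : ℝ≥0 => r + s * v) := fun _ _ h =>
    add_le_add_right (mul_le_mul_right h s) r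
  rw [himage, ← hmono.map_csInf_of_continuousAt (by fun_prop) hS (OrderBot.bddBelow S)]
  rfl

end Wasserstein

section SubtreeDistance

variable {X Y : ℕ → Type} {T : ℕ} [∀ n, Fintype (X n)] [∀ n, Fintype (Y n)]
  {p : ∀ t, NDPre X t → X t → ℝ≥0} {q : ∀ t, NDPre Y t → Y t → ℝ≥0}
  {d : NDPath X T → NDPath Y T → ℝ≥0}

theorem NDsub_self (k : NDPre X T) (l : NDPre Y T) : NDsub T p q d T k l = d k l := by
  rw [NDsub, dif_neg (lt_irrefl T)]

theorem NDsub_of_lt {t : ℕ} (ht : t < T) (k : NDPre X t) (l : NDPre Y t) :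
    NDsub T p q d t k l =
      dW (p t k) (q t l) (fun x y => NDsub T p q d (t + 1) (Fin.snoc k x) (Fin.snoc l y)) := by
  rw [NDsub, dif_pos ht]
  rfl

end SubtreeDistance

theorem sum_stageCost_snoc {X Y : ℕ → Type} (w : ℕ → ℝ≥0) (c : ∀ n, X n → Y n → ℝ≥0)
    {t : ℕ} (k : NDPre X t) (l : NDPre Y t) (x : X t) (y : Y t) :
    ∑ τ : Fin (t + 1), w τ.1 * c τ.1 ((Fin.snoc k x : NDPre X (t + 1)) τ)
        ((Fin.snoc l y : NDPre Y (t + 1)) τ)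
      = ∑ τ : Fin t, w τ.1 * c τ.1 (k τ) (l τ) + w t * c t x y := by
  rw [Fin.sum_univ_castSucc]
  simp only [Fin.snoc_castSucc, Fin.snoc_last, Fin.val_castSucc, Fin.val_last]

theorem subtreeDistance_eq_past_cost_add_sum_wasserstein_general
    (T : ℕ) (X Y : ℕ → Type)
    [∀ n, Fintype (X n)]
    [∀ n, Fintype (Y n)]
    (P : ∀ n, X n → ℝ≥0) (Q : ∀ n, Y n → ℝ≥0)
    (hP : ∀ t, t < T → ∑ x, P t x = 1) (hQ : ∀ t, t < T → ∑ y, Q t y = 1)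
    (w : ℕ → ℝ≥0) (dstage : ∀ n, X n → Y n → ℝ≥0)
    (t : ℕ) (ht : t ≤ T) (k : NDPre X t) (l : NDPre Y t) :
    NDsub T (fun s _ x => P s x) (fun s _ y => Q s y)
        (fun i j => ∑ s : Fin T, w s.1 * dstage s.1 (i s) (j s)) t k l
      = (∑ τ : Fin t, w τ.1 * dstage τ.1 (k τ) (l τ))
        + ∑ τ ∈ Finset.Ico t T, w τ * dW (P τ) (Q τ) (dstage τ) := by
  induction ht using Nat.decreasingInduction with
  | self => rw [NDsub_self, Ico_self, sum_empty, add_zero]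
  | of_succ t htT ih =>
    have hnext : ∀ (x : X t) (y : Y t), NDsub T (fun s _ x => P s x) (fun s _ y => Q s y)
        (fun i j => ∑ s : Fin T, w s.1 * dstage s.1 (i s) (j s)) (t + 1)
        (Fin.snoc k x) (Fin.snoc l y)
          = (∑ τ : Fin t, w τ.1 * dstage τ.1 (k τ) (l τ)
              + ∑ τ ∈ Ico (t + 1) T, w τ * dW (P τ) (Q τ) (dstage τ))
            + w t * dstage t x y := fun x y => by
      rw [ih, sum_stageCost_snoc]
      ring
    rw [NDsub_of_lt htT, funext₂ hnext, dW_const_add_mul (hP t htT) (hQ t htT),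
      sum_eq_sum_Ico_succ_bot htT]
    ring

/-- For stagewise-independent trees and a separable path cost, the sub-tree
distance at a stage-`t` prefix pair `(k,l)` equals the weighted sum of the stage costs along
the prefixes plus the weighted sum of the Wasserstein distances of the remaining stages. -/
theorem subtreeDistance_eq_past_cost_add_sum_wasserstein
    (T : ℕ) (hT : 1 ≤ T) (X Y : ℕ → Type)
    [∀ n, Fintype (X n)] [∀ n, Nonempty (X n)]
    [∀ n, Fintype (Y n)] [∀ n, Nonempty (Y n)]
    (P : ∀ n, X n → ℝ≥0) (Q : ∀ n, Y n → ℝ≥0)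
    (hP : ∀ t, t < T → ∑ x, P t x = 1) (hQ : ∀ t, t < T → ∑ y, Q t y = 1)
    (w : ℕ → ℝ≥0) (dstage : ∀ n, X n → Y n → ℝ≥0)
    (t : ℕ) (ht : t ≤ T) (k : NDPre X t) (l : NDPre Y t) :
    NDsub T (fun s _ x => P s x) (fun s _ y => Q s y)
        (fun i j => ∑ s : Fin T, w s.1 * dstage s.1 (i s) (j s)) t k l
      = (∑ τ : Fin t, w τ.1 * dstage τ.1 (k τ) (l τ))
        + ∑ τ ∈ Finset.Ico t T, w τ * dW (P τ) (Q τ) (dstage τ) :=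
  subtreeDistance_eq_past_cost_add_sum_wasserstein_general T X Y P Q hP hQ w dstage t ht k l
end

section
/- Let T ≥ 1, let X_1,…,X_T and Y_1,…,Y_T be finite nonempty types, and let two (general) scenario trees be given by conditional probabilities p_t and q_t. For any fixed π : X×Y → ℝ≥0, the following two families of constraints are equivalent: (i) for every 0 ≤ t < T, every stage-t prefix pair (k,l), and every full path i extending k: Σ over paths j extending l of π(i,j) = P(i|k)·π_{k,l}; (ii) for every 0 ≤ t < T, every stage-t prefix pair (k,l), and every x ∈ X_{t+1}: Σ_{y ∈ Y_{t+1}} π_{k·x, l·y} = p_{t+1}(k,x)·π_{k,l}. -/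
open scoped NNReal Classical
open Finset

/-! Forward: summing the leaf constraint at `(k, l)` over the paths through `k·x` collapses
`P(· ∣ k)` to `p(k, x)`, because the conditional probabilities of the paths below `k·x` sum to one.
Backward: descending induction on `t`. Splitting the paths through `l` by their next node and
applying the leaf constraint at stage `t + 1` gives `P(i ∣ k·i_t) · Σ_y π_{k·i_t, l·y}`, and the
successor constraint together with `P(i ∣ k) = p(k, i_t) · P(i ∣ k·i_t)` closes the step. -/

variable {X Y : ℕ → Type} {T : ℕ}

lemma ndExtends_snoc_iff {t : ℕ} (ht : t < T) (i : NDPath X T) (k : NDPre X t) (x : X t) :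
    NDExtends i (Fin.snoc k x) ↔ NDExtends i k ∧ i ⟨t, ht⟩ = x := by
  constructor
  · intro h
    refine ⟨fun τ hτ => ?_, ?_⟩
    · simpa [Fin.snoc, τ.2] using h τ.castSucc hτ
    · simpa using h (Fin.last t) ht
  · rintro ⟨hk, hx⟩ τ hτ
    induction τ using Fin.lastCases with
    | last => simpa using hx
    | cast τ => simpa using hk τ hτ

lemma ndExtends_iff_eq (i : NDPath X T) (k : NDPre X T) : NDExtends i k ↔ i = k :=
  ⟨fun h => funext fun τ => h τ τ.2, fun h _ _ => h ▸ rfl⟩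

lemma sum_extends_eq_sum_sum_extends_snoc [∀ n, Fintype (Y n)] {t : ℕ} (ht : t < T)
    (l : NDPre Y t) (f : NDPath Y T → ℝ≥0) :
    (∑ j : NDPath Y T, if NDExtends j l then f j else 0)
      = ∑ y : Y t, ∑ j : NDPath Y T, if NDExtends j (Fin.snoc l y) then f j else 0 := by
  rw [sum_comm]
  refine sum_congr rfl fun j _ => ?_
  simp only [ndExtends_snoc_iff ht, ite_and]
  split_ifs <;> simp

lemma ndcondP_self (p : ∀ t, NDPre X t → X t → ℝ≥0) (i : NDPath X T) : NDcondP p T i = 1 := by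
  simp [NDcondP]

lemma ndcondP_eq_mul_succ (p : ∀ t, NDPre X t → X t → ℝ≥0) {t : ℕ} (ht : t < T)
    {i : NDPath X T} {k : NDPre X t} (hik : NDExtends i k) :
    NDcondP p t i = p t k (i ⟨t, ht⟩) * NDcondP p (t + 1) i := by
  rw [NDcondP, prod_eq_prod_Ico_succ_bot ht, dif_pos ht]
  congr 2
  exact funext fun s => hik s (s.2.trans ht)

lemma ndsubw_eq_sum_extends [∀ n, Fintype (X n)] [∀ n, Fintype (Y n)]
    (π : NDPath X T → NDPath Y T → ℝ≥0) (t : ℕ) (k : NDPre X t) (l : NDPre Y t) :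
    NDsubw π t k l = ∑ i : NDPath X T,
      if NDExtends i k then ∑ j : NDPath Y T, (if NDExtends j l then π i j else 0) else 0 := by
  refine sum_congr rfl fun i _ => ?_
  split_ifs with h <;> simp [h]

lemma ndsubw_self [∀ n, Fintype (X n)] [∀ n, Fintype (Y n)]
    (π : NDPath X T → NDPath Y T → ℝ≥0) (k : NDPre X T) (l : NDPre Y T) :
    NDsubw π T k l = ∑ j : NDPath Y T, if NDExtends j l then π k j else 0 := by
  simp [ndsubw_eq_sum_extends, ndExtends_iff_eq]

section Probability

variable [∀ n, Fintype (X n)] (p : ∀ t, NDPre X t → X t → ℝ≥0)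

lemma sum_extends_snoc_ndcondP_eq_mul {t : ℕ} (ht : t < T) (k : NDPre X t) (x : X t) :
    (∑ i : NDPath X T, if NDExtends i (Fin.snoc k x) then NDcondP p t i else 0)
      = p t k x * ∑ i : NDPath X T,
          if NDExtends i (Fin.snoc k x) then NDcondP p (t + 1) i else 0 := by
  rw [mul_sum]
  refine sum_congr rfl fun i _ => ?_
  split_ifs with h
  · obtain ⟨hik, rfl⟩ := (ndExtends_snoc_iff ht i k x).mp h
    exact ndcondP_eq_mul_succ p ht hik
  · rw [mul_zero]

lemma sum_extends_ndcondP (hp : ∀ t, t < T → ∀ k, ∑ x, p t k x = 1) {t : ℕ} (htT : t ≤ T)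
    (k : NDPre X t) :
    (∑ i : NDPath X T, if NDExtends i k then NDcondP p t i else 0) = 1 := by
  induction htT using Nat.decreasingInduction with
  | self => simp [ndExtends_iff_eq, ndcondP_self]
  | of_succ t ht ih =>
    simp only [sum_extends_eq_sum_sum_extends_snoc ht, sum_extends_snoc_ndcondP_eq_mul p ht,
      ih, mul_one, hp t ht k]

lemma sum_extends_snoc_ndcondP (hp : ∀ t, t < T → ∀ k, ∑ x, p t k x = 1) {t : ℕ} (ht : t < T)
    (k : NDPre X t) (x : X t) :
    (∑ i : NDPath X T, if NDExtends i (Fin.snoc k x) then NDcondP p t i else 0) = p t k x := by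
  rw [sum_extends_snoc_ndcondP_eq_mul p ht, sum_extends_ndcondP p hp ht, mul_one]

end Probability

section Constraints

variable [∀ n, Fintype (X n)] [∀ n, Fintype (Y n)] (p : ∀ t, NDPre X t → X t → ℝ≥0)
  (π : NDPath X T → NDPath Y T → ℝ≥0)

lemma successor_constraint_of_leaf_constraint (hp : ∀ t, t < T → ∀ k, ∑ x, p t k x = 1)
    {t : ℕ} (ht : t < T) (k : NDPre X t) (l : NDPre Y t)
    (hleaf : ∀ i : NDPath X T, NDExtends i k →
      (∑ j : NDPath Y T, if NDExtends j l then π i j else 0) = NDcondP p t i * NDsubw π t k l)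
    (x : X t) :
    (∑ y : Y t, NDsubw π (t + 1) (Fin.snoc k x) (Fin.snoc l y)) = p t k x * NDsubw π t k l := by
  calc (∑ y : Y t, NDsubw π (t + 1) (Fin.snoc k x) (Fin.snoc l y))
      = ∑ i : NDPath X T, if NDExtends i (Fin.snoc k x)
          then ∑ j : NDPath Y T, (if NDExtends j l then π i j else 0) else 0 := by
        simp only [ndsubw_eq_sum_extends, sum_extends_eq_sum_sum_extends_snoc ht l]
        rw [sum_comm]
        refine sum_congr rfl fun i _ => ?_
        split_ifs <;> simp
    _ = ∑ i : NDPath X T,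
          if NDExtends i (Fin.snoc k x) then NDcondP p t i * NDsubw π t k l else 0 := by
        refine sum_congr rfl fun i _ => ?_
        split_ifs with h
        · exact hleaf i ((ndExtends_snoc_iff ht i k x).mp h).1
        · rfl
    _ = p t k x * NDsubw π t k l := by
        rw [← sum_extends_snoc_ndcondP p hp ht k x, sum_mul]
        simp only [ite_mul, zero_mul]

lemma leaf_constraint_of_successor_constraint
    (hsucc : ∀ t, t < T → ∀ (k : NDPre X t) (l : NDPre Y t) (x : X t),
      (∑ y : Y t, NDsubw π (t + 1) (Fin.snoc k x) (Fin.snoc l y)) = p t k x * NDsubw π t k l)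
    {t : ℕ} (htT : t ≤ T) (k : NDPre X t) (l : NDPre Y t) (i : NDPath X T)
    (hik : NDExtends i k) :
    (∑ j : NDPath Y T, if NDExtends j l then π i j else 0) = NDcondP p t i * NDsubw π t k l := by
  induction htT using Nat.decreasingInduction with
  | self => rw [ndcondP_self, ndsubw_self, one_mul, (ndExtends_iff_eq i k).mp hik]
  | of_succ t ht ih =>
    calc (∑ j : NDPath Y T, if NDExtends j l then π i j else 0)
        = ∑ y : Y t, ∑ j : NDPath Y T, if NDExtends j (Fin.snoc l y) then π i j else 0 :=
          sum_extends_eq_sum_sum_extends_snoc ht l (π i)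
      _ = ∑ y : Y t, NDcondP p (t + 1) i
            * NDsubw π (t + 1) (Fin.snoc k (i ⟨t, ht⟩)) (Fin.snoc l y) :=
          sum_congr rfl fun y _ => ih _ _ ((ndExtends_snoc_iff ht i k _).mpr ⟨hik, rfl⟩)
      _ = NDcondP p t i * NDsubw π t k l := by
          rw [← mul_sum, hsucc t ht, ndcondP_eq_mul_succ p ht hik, mul_left_comm, mul_assoc]

end Constraints

theorem leaf_constraints_iff_successor_constraints_general
    (T : ℕ) (X Y : ℕ → Type)
    [∀ n, Fintype (X n)]
    [∀ n, Fintype (Y n)]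
    (p : ∀ t, NDPre X t → X t → ℝ≥0)
    (hp : ∀ t, t < T → ∀ k, ∑ x, p t k x = 1)
    (π : NDPath X T → NDPath Y T → ℝ≥0) :
    (∀ t, t < T → ∀ (k : NDPre X t) (l : NDPre Y t) (i : NDPath X T),
        NDExtends i k →
        (∑ j : NDPath Y T, if NDExtends j l then π i j else 0)
          = NDcondP p t i * NDsubw π t k l)
    ↔
    (∀ t, t < T → ∀ (k : NDPre X t) (l : NDPre Y t) (x : X t),
        (∑ y : Y t, NDsubw π (t+1) (Fin.snoc k x) (Fin.snoc l y))
          = p t k x * NDsubw π t k l) :=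
  ⟨fun hleaf t ht k l =>
      successor_constraint_of_leaf_constraint p π hp ht k l (hleaf t ht k l),
    fun hsucc _ ht k l i =>
      leaf_constraint_of_successor_constraint p π hsucc ht.le k l i⟩

/-- For a fixed transport plan `π` on path pairs, the conditional marginal
constraints written with leaf (full-path) sums are equivalent to the constraints written in
successor form. -/
theorem leaf_constraints_iff_successor_constraints
    (T : ℕ) (hT : 1 ≤ T) (X Y : ℕ → Type)
    [∀ n, Fintype (X n)] [∀ n, Nonempty (X n)]
    [∀ n, Fintype (Y n)] [∀ n, Nonempty (Y n)]
    (p : ∀ t, NDPre X t → X t → ℝ≥0) (q : ∀ t, NDPre Y t → Y t → ℝ≥0)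
    (hp : ∀ t, t < T → ∀ k, ∑ x, p t k x = 1)
    (hq : ∀ t, t < T → ∀ l, ∑ y, q t l y = 1)
    (π : NDPath X T → NDPath Y T → ℝ≥0) :
    (∀ t, t < T → ∀ (k : NDPre X t) (l : NDPre Y t) (i : NDPath X T),
        NDExtends i k →
        (∑ j : NDPath Y T, if NDExtends j l then π i j else 0)
          = NDcondP p t i * NDsubw π t k l)
    ↔
    (∀ t, t < T → ∀ (k : NDPre X t) (l : NDPre Y t) (x : X t),
        (∑ y : Y t, NDsubw π (t+1) (Fin.snoc k x) (Fin.snoc l y))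
          = p t k x * NDsubw π t k l) :=
  leaf_constraints_iff_successor_constraints_general T X Y p hp π
end

section
/- Let T ≥ 1, let X_1,…,X_T and Y_1,…,Y_T be finite nonempty types, let two (general) scenario trees be given by conditional probabilities p_t and q_t, and let d : X×Y → ℝ≥0 be a cost on path pairs. Then the two dynamic-programming formulations of the nested distance coincide: for every 0 ≤ t ≤ T, every stage-t prefix pair (k,l) and every m ≥ 0, Φ_t(k,l,m) = m·D_t(k,l). -/
open scoped NNReal Classical
open Finset

/-
Both recursions solve the same stage-wise transport problems, except that `Φ` transports mass
`m` instead of mass one. By backward induction `Φ_{t+1}(k·x, l·y, π(x,y)) = π(x,y)·D_{t+1}(k·x, l·y)`,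
so the stage-`t` problem for `Φ` becomes a linear transport problem with marginals scaled by `m`,
and the optimal value of a linear transport problem is positively homogeneous in its marginals.
-/

open scoped Pointwise

theorem NNReal.sInf_smul (m : ℝ≥0) (S : Set ℝ≥0) : sInf (m • S) = m • sInf S := by
  apply NNReal.coe_injective
  rw [smul_eq_mul, NNReal.coe_mul, NNReal.coe_sInf, NNReal.coe_sInf, ← smul_eq_mul,
    ← Real.sInf_smul_of_nonneg m.coe_nonneg]
  exact congrArg sInf (Set.image_smul_distrib NNReal.toRealHom m S)

theorem dW_mul_const {A B : Type*} [Fintype A] [Fintype B]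
    (P : A → ℝ≥0) (Q : B → ℝ≥0) (c : A → B → ℝ≥0) (m : ℝ≥0) :
    dW (fun a => P a * m) (fun b => Q b * m) c = m * dW P Q c := by
  rcases eq_or_ne m 0 with rfl | hm
  · rw [zero_mul]
    exact nonpos_iff_eq_zero.mp (csInf_le (OrderBot.bddBelow _) ⟨0, by simp, by simp, by simp⟩)
  rw [dW, dW, ← smul_eq_mul, ← NNReal.sInf_smul]
  congr 1
  ext v
  constructor
  · rintro ⟨π, hP, hQ, rfl⟩
    refine ⟨_, ⟨fun a b => π a b / m, fun a => ?_, fun b => ?_, rfl⟩, ?_⟩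
    · rw [← Finset.sum_div, hP a, mul_div_cancel_right₀ _ hm]
    · rw [← Finset.sum_div, hQ b, mul_div_cancel_right₀ _ hm]
    · simp only [smul_eq_mul, Finset.mul_sum, ← mul_assoc, mul_div_cancel₀ _ hm]
  · rintro ⟨_, ⟨σ, hP, hQ, rfl⟩, rfl⟩
    refine ⟨fun a b => m * σ a b, fun a => ?_, fun b => ?_, ?_⟩
    · rw [← Finset.mul_sum, hP a, mul_comm]
    · rw [← Finset.mul_sum, hQ b, mul_comm]
    · simp only [smul_eq_mul, Finset.mul_sum, mul_assoc]

/-- The two dynamic-programming formulations of the nested distance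
coincide: `Φ_t(k,l,m) = m · D_t(k,l)`. -/
theorem Phi_eq_mass_mul_subtreeDistance
    (T : ℕ) (X Y : ℕ → Type)
    [∀ n, Fintype (X n)]
    [∀ n, Fintype (Y n)]
    (p : ∀ t, NDPre X t → X t → ℝ≥0) (q : ∀ t, NDPre Y t → Y t → ℝ≥0)
    (d : NDPath X T → NDPath Y T → ℝ≥0)
    (t : ℕ) (k : NDPre X t) (l : NDPre Y t) (m : ℝ≥0) :
    NDPhi T p q d t k l m = m * NDsub T p q d t k l := by
  by_cases h : t < T
  · rw [NDPhi, NDsub, dif_pos h, dif_pos h]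
    simp only [Phi_eq_mass_mul_subtreeDistance T X Y p q d (t + 1)]
    exact dW_mul_const _ _ _ m
  · rw [NDPhi, NDsub, dif_neg h, dif_neg h]
termination_by T - t
end
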